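/- Let A be a commutative complex Hausdorff topological algebra whose topology is induced by a family of uniform seminorms, whose underlying locally convex space is barrelled, and which is spectrally bounded (for every x ∈ A the spectrum of x is a bounded subset of ℂ). Then there is a uniform norm on A inducing the topology of A; in particular A is a uniform normed algebra. -/

import Mathlib

open scoped ENNReal NNReal
open UniformSpace

/-! A uniform seminorm satisfies `p (x ^ 2 ^ n) = p x ^ 2 ^ n`. Equip the unitization of `A` with
`‖(c, a)‖ = ‖c‖ + p a` and pass to its completion: there Gelfand's formula along the subsequence
`2 ^ n` shows that `p x` is the spectral radius of `x`, and the spectrum only shrinks under the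
completion, so `p x` is bounded by the quasispectrum of `x` in `A`. Hence spectral boundedness
makes the family `P` pointwise bounded, and its supremum `Q` is again a uniform seminorm. As a
supremum of continuous seminorms `Q` is lower semicontinuous, so continuous because `A` is
barrelled; dominating every `P i`, it alone generates the topology, and it is a norm because `A`
is Hausdorff. -/

theorem spectralRadius_eq_nnnorm_of_nnnorm_pow_two_pow {B : Type*} [NormedRing B]
    [NormedAlgebra ℂ B] [CompleteSpace B] {a : B}
    (ha : ∀ n : ℕ, ‖a ^ 2 ^ n‖₊ = ‖a‖₊ ^ 2 ^ n) :
    spectralRadius ℂ a = ‖a‖₊ := by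
  refine tendsto_nhds_unique (l := Filter.atTop (α := ℕ)) ?_ tendsto_const_nhds
  convert (spectrum.pow_nnnorm_pow_one_div_tendsto_nhds_spectralRadius a).comp
    (tendsto_pow_atTop_atTop_of_one_lt one_lt_two) using 1
  funext n
  rw [Function.comp_apply, ha, ENNReal.coe_pow, ← ENNReal.rpow_natCast, ← ENNReal.rpow_mul]
  simp

theorem UniformSpace.Completion.spectrum_coe_subset {𝕜 R : Type*} [NormedField 𝕜]
    [SeminormedRing R] [NormedAlgebra 𝕜 R] (a : R) :
    spectrum 𝕜 (a : Completion R) ⊆ spectrum 𝕜 a :=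
  AlgHom.spectrum_apply_subset
    ({ Completion.coeRingHom with commutes' := fun _ => rfl } : R →ₐ[𝕜] Completion R) a

theorem nnnorm_le_spectralRadius_of_nnnorm_pow_two_pow {R : Type*} [SeminormedCommRing R]
    [NormedAlgebra ℂ R] {a : R} (ha : ∀ n : ℕ, ‖a ^ 2 ^ n‖₊ = ‖a‖₊ ^ 2 ^ n) :
    (‖a‖₊ : ℝ≥0∞) ≤ spectralRadius ℂ a := by
  have hcoe : ∀ n : ℕ, ‖(a : Completion R) ^ 2 ^ n‖₊ = ‖(a : Completion R)‖₊ ^ 2 ^ n := by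
    intro n
    have hpow : ((a ^ 2 ^ n : R) : Completion R) = (a : Completion R) ^ 2 ^ n :=
      map_pow Completion.coeRingHom a (2 ^ n)
    rw [← hpow, Completion.nnnorm_coe, Completion.nnnorm_coe, ha]
  calc (‖a‖₊ : ℝ≥0∞) = ‖(a : Completion R)‖₊ := by rw [Completion.nnnorm_coe]
    _ = spectralRadius ℂ (a : Completion R) :=
      (spectralRadius_eq_nnnorm_of_nnnorm_pow_two_pow hcoe).symm
    _ ≤ spectralRadius ℂ a := biSup_mono (Completion.spectrum_coe_subset a)

theorem Seminorm.iterate_mul_self {𝕜 A : Type*} [NormedField 𝕜] [NonUnitalRing A] [Module 𝕜 A]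
    (p : Seminorm 𝕜 A) (hp : ∀ x, p (x * x) = p x * p x) (x : A) (n : ℕ) :
    p ((fun y => y * y)^[n] x) = p x ^ 2 ^ n := by
  induction n with
  | zero => simp
  | succ n ih => rw [Function.iterate_succ_apply', hp, ih, pow_succ, pow_mul, sq]

theorem Unitization.inr_iterate_mul_self {R A : Type*} [CommRing R] [NonUnitalRing A]
    [Module R A] [IsScalarTower R A A] [SMulCommClass R A A] (x : A) (n : ℕ) :
    (((fun y => y * y)^[n] x : A) : Unitization R A) = (x : Unitization R A) ^ 2 ^ n := by
  induction n with
  | zero => simp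
  | succ n ih => rw [Function.iterate_succ_apply', Unitization.inr_mul, ih, pow_succ, pow_mul, sq]

namespace Unitization

variable {𝕜 A : Type*} [NormedField 𝕜] [NonUnitalCommRing A] [Module 𝕜 A]
  [IsScalarTower 𝕜 A A] [SMulCommClass 𝕜 A A]

def l1AddGroupSeminorm (p : Seminorm 𝕜 A) : AddGroupSeminorm (Unitization 𝕜 A) where
  toFun u := ‖u.fst‖ + p u.snd
  map_zero' := by simp
  add_le' u v := by
    simp only [fst_add, snd_add]
    linarith [norm_add_le u.fst v.fst, map_add_le_add p u.snd v.snd]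
  neg' u := by simp

abbrev seminormedCommRingOfSeminorm (p : Seminorm 𝕜 A)
    (hp : ∀ x y, p (x * y) ≤ p x * p y) : SeminormedCommRing (Unitization 𝕜 A) where
  __ := (l1AddGroupSeminorm p).toSeminormedAddCommGroup
  __ : CommRing (Unitization 𝕜 A) := inferInstance
  norm_mul_le u v := by
    change ‖(u * v).fst‖ + p (u * v).snd ≤ (‖u.fst‖ + p u.snd) * (‖v.fst‖ + p v.snd)
    have hsnd : p (u * v).snd ≤ ‖u.fst‖ * p v.snd + ‖v.fst‖ * p u.snd + p u.snd * p v.snd := by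
      rw [snd_mul]
      refine (map_add_le_add p _ _).trans (add_le_add ((map_add_le_add p _ _).trans ?_) (hp _ _))
      rw [map_smul_eq_mul, map_smul_eq_mul]
    rw [fst_mul, norm_mul]
    nlinarith [apply_nonneg p u.snd, apply_nonneg p v.snd, norm_nonneg u.fst, norm_nonneg v.fst]

abbrev normedAlgebraOfSeminorm (p : Seminorm 𝕜 A) (hp : ∀ x y, p (x * y) ≤ p x * p y) :
    letI := seminormedCommRingOfSeminorm p hp
    NormedAlgebra 𝕜 (Unitization 𝕜 A) :=
  letI := seminormedCommRingOfSeminorm p hp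
  { norm_smul_le c u := by
      change ‖(c • u).fst‖ + p (c • u).snd ≤ ‖c‖ * (‖u.fst‖ + p u.snd)
      rw [fst_smul, snd_smul, map_smul_eq_mul, smul_eq_mul, norm_mul, mul_add] }

end Unitization

theorem Seminorm.le_of_forall_mem_quasispectrum_norm_le {A : Type*} [NonUnitalCommRing A]
    [Module ℂ A] [IsScalarTower ℂ A A] [SMulCommClass ℂ A A] (p : Seminorm ℂ A)
    (hmul : ∀ x y, p (x * y) ≤ p x * p y) (hsq : ∀ x, p (x * x) = p x * p x) {x : A} {M : ℝ}
    (hM : ∀ z ∈ quasispectrum ℂ x, ‖z‖ ≤ M) : p x ≤ M := by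
  let := Unitization.seminormedCommRingOfSeminorm p hmul
  let := Unitization.normedAlgebraOfSeminorm p hmul
  have hnorm_inr (y : A) : ‖(y : Unitization ℂ A)‖ = p y := by
    change ‖(0 : ℂ)‖ + p y = p y
    rw [norm_zero, zero_add]
  have hpow (n : ℕ) : ‖(x : Unitization ℂ A) ^ 2 ^ n‖₊ = ‖(x : Unitization ℂ A)‖₊ ^ 2 ^ n := by
    ext
    rw [NNReal.coe_pow, coe_nnnorm, coe_nnnorm, ← Unitization.inr_iterate_mul_self (R := ℂ),
      hnorm_inr, hnorm_inr, p.iterate_mul_self hsq]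
  have hM₀ : 0 ≤ M := by simpa using hM 0 (quasispectrum.zero_mem ℂ x)
  have hrad : spectralRadius ℂ (x : Unitization ℂ A) ≤ ENNReal.ofReal M := by
    refine iSup₂_le fun z hz => ?_
    rw [← Unitization.quasispectrum_eq_spectrum_inr] at hz
    rw [← ENNReal.ofReal_coe_nnreal, coe_nnnorm]
    exact ENNReal.ofReal_le_ofReal (hM z hz)
  have hle := (nnnorm_le_spectralRadius_of_nnnorm_pow_two_pow hpow).trans hrad
  rwa [← ENNReal.ofReal_coe_nnreal, coe_nnnorm, hnorm_inr, ENNReal.ofReal_le_ofReal_iff hM₀] at hle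

section iSup

variable {𝕜 A ι : Type*} [NormedField 𝕜] [NonUnitalRing A] [Module 𝕜 A] {p : ι → Seminorm 𝕜 A}

theorem Seminorm.iSup_apply_mul_le [Nonempty ι] (hp : BddAbove (Set.range p))
    (hmul : ∀ i x y, p i (x * y) ≤ p i x * p i y) (x y : A) :
    (⨆ i, p i) (x * y) ≤ (⨆ i, p i) x * (⨆ i, p i) y := by
  have hle (i : ι) : p i ≤ ⨆ i, p i := le_ciSup hp i
  rw [Seminorm.iSup_apply hp (x := x * y)]
  exact ciSup_le fun i => (hmul i x y).trans
    (mul_le_mul (hle i x) (hle i y) (apply_nonneg _ _) (apply_nonneg _ _))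

theorem Seminorm.iSup_apply_mul_self [Nonempty ι] (hp : BddAbove (Set.range p))
    (hsq : ∀ i x, p i (x * x) = p i x * p i x) (x : A) :
    (⨆ i, p i) (x * x) = (⨆ i, p i) x * (⨆ i, p i) x := by
  simp only [Seminorm.iSup_apply hp, hsq, ← sq]
  exact (Real.iSup_pow (fun i => apply_nonneg (p i) x) 2).symm

end iSup

theorem WithSeminorms.const_of_continuous_of_le {𝕜 E ι : Type*} [NontriviallyNormedField 𝕜]
    [AddCommGroup E] [Module 𝕜 E] [TopologicalSpace E] {p : SeminormFamily 𝕜 E ι}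
    (hp : WithSeminorms p) {q : Seminorm 𝕜 E} (hq : Continuous q) (hle : ∀ i, p i ≤ q) :
    WithSeminorms (fun _ : Fin 1 => q) := by
  refine hp.congr ((Seminorm.isBounded_const _ _).mpr ?_) ((Seminorm.const_isBounded _ _).mpr ?_)
  · obtain ⟨s, C, -, hC⟩ := Seminorm.bound_of_continuous hp q hq
    exact ⟨s, C, hC⟩
  · exact fun i => ⟨1, by simpa using hle i⟩

/-- Let `A` be a commutative complex Hausdorff topological algebra whose topology is
induced by a family `P` of uniform seminorms, which is barrelled and spectrally
bounded (the spectrum of every element, computed in the unitization, is bounded).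
Then the topology of `A` is induced by a single uniform norm; in particular `A` is a
uniform normed algebra. -/
theorem uniform_norm_of_barrelled_spectrally_bounded {A : Type*} [NonUnitalCommRing A]
    [Module ℂ A] [SMulCommClass ℂ A A] [IsScalarTower ℂ A A]
    [TopologicalSpace A] [T2Space A]
    {ι : Type*} [Nonempty ι] (P : SeminormFamily ℂ A ι) (hP : WithSeminorms P)
    (hPmul : ∀ i x y, P i (x * y) ≤ P i x * P i y)
    (hPsq : ∀ i x, P i (x * x) = P i x * P i x)
    [BarrelledSpace ℂ A]
    (hsb : ∀ x : A, Bornology.IsBounded (quasispectrum ℂ x)) :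
    ∃ Q : Seminorm ℂ A,
      (∀ x, Q x = 0 → x = 0) ∧
      (∀ x y, Q (x * y) ≤ Q x * Q y) ∧
      (∀ x, Q (x * x) = Q x * Q x) ∧
      WithSeminorms (fun _ : Fin 1 => Q) := by
  have hbdd : BddAbove (Set.range P) := Seminorm.bddAbove_range_iff.mpr fun x => by
    obtain ⟨M, hM⟩ := isBounded_iff_forall_norm_le.mp (hsb x)
    exact ⟨M, Set.forall_mem_range.mpr fun i =>
      (P i).le_of_forall_mem_quasispectrum_norm_le (hPmul i) (hPsq i) hM⟩
  have hcont : Continuous ⇑(⨆ i, P i) := by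
    simpa only [Seminorm.coe_iSup_eq hbdd] using
      Seminorm.continuous_iSup P hP.continuous_seminorm hbdd
  have hQ : WithSeminorms (fun _ : Fin 1 => ⨆ i, P i) :=
    hP.const_of_continuous_of_le hcont (le_ciSup hbdd)
  refine ⟨⨆ i, P i, fun x hx => ?_, Seminorm.iSup_apply_mul_le hbdd hPmul,
    Seminorm.iSup_apply_mul_self hbdd hPsq, hQ⟩
  by_contra hx₀
  obtain ⟨-, hne⟩ := hQ.separating_of_T1 x hx₀
  exact hne hx
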